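/- Let G be a finite connected weighted graph with more than one vertex, ψ ∈ ℓ²(G) with Ψ(φ₀) = ⟨ψ, φ₀⟩ ≠ 0. Then for every f ∈ ℓ²(G) and every ε > 0: ‖f‖² ≤ (1+ε) · (‖ψ‖² / (λ₁ |Ψ(φ₀)|²)) · ‖∇f‖² + ((1+ε)/ε) · |⟨ψ, f⟩|² / |Ψ(φ₀)|². -/

import Mathlib

open Finset

/-- Weighted gradient norm squared: `‖∇f‖² = (1/2) Σ_{u,v} |f(u)−f(v)|² w(u,v)`. -/
noncomputable def gradSq {V : Type*} [Fintype V] (w : V → V → ℝ) (f : V → ℂ) : ℝ :=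
  (1 / 2) * ∑ u, ∑ v, ‖f u - f v‖ ^ 2 * w u v

/-- Weighted graph Laplacian: `(Lf)(v) = Σ_u (f(v) − f(u)) w(v,u)`. -/
noncomputable def lap {V : Type*} [Fintype V] (w : V → V → ℝ) (f : V → ℂ) : V → ℂ :=
  fun v => ∑ u, (f v - f u) * ((w v u : ℝ) : ℂ)

/-- Inner product on `ℓ²(G)`. -/
noncomputable def ip {V : Type*} [Fintype V] (ψ f : V → ℂ) : ℂ :=
  ∑ v, (starRingEnd ℂ) (ψ v) * f v

/-- Squared `ℓ²(G)` norm. -/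
noncomputable def nsq {V : Type*} [Fintype V] (f : V → ℂ) : ℝ :=
  ∑ v, ‖f v‖ ^ 2

/-- The graph with weight `w` is connected. -/
def GraphConnected {V : Type*} [Fintype V] (w : V → V → ℝ) : Prop :=
  ∀ u v : V, Relation.ReflTransGen (fun a b => 0 < w a b) u v

/-- `lam1` is the first (smallest) nonzero eigenvalue of the Laplacian of `(V, w)`. -/
def IsFirstNonzeroEig {V : Type*} [Fintype V] (w : V → V → ℝ) (lam1 : ℝ) : Prop :=
  0 < lam1 ∧
  (∃ φ : V → ℂ, φ ≠ 0 ∧ lap w φ = fun v => (lam1 : ℂ) * φ v) ∧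
  ∀ (μ : ℝ) (φ : V → ℂ), φ ≠ 0 → (lap w φ = fun v => (μ : ℂ) * φ v) → μ = 0 ∨ lam1 ≤ μ

/-! Write `f = c φ₀ + g` with `g ⊥ φ₀`. Since the graph is connected, the kernel of the
Laplacian consists of the constants, so expanding `g` in an eigenbasis of the (Hermitian)
Laplacian gives the Poincaré inequality `λ₁ ‖g‖² ≤ ⟨g, L g⟩ = ‖∇g‖² = ‖∇f‖²`.
Pairing with `ψ` gives `c Ψ(φ₀) = ⟨ψ, f⟩ - ⟨ψ, g⟩`, and because `g ⊥ φ₀` only the component of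
`ψ` orthogonal to `φ₀` sees `g`: `|⟨ψ, g⟩|² ≤ (‖ψ‖² - |Ψ(φ₀)|²) ‖g‖²`. Young's inequality
`(a + b)² ≤ (1 + 1/ε) a² + (1 + ε) b²` then bounds `|c|²`, and the `-|Ψ(φ₀)|² ‖g‖²` term
absorbs the `‖g‖²` in `‖f‖² = |c|² + ‖g‖²`. -/

open RCLike
open scoped InnerProductSpace

theorem add_sq_le_one_add_div_mul_sq_add {a b ε : ℝ} (hε : 0 < ε) :
    (a + b) ^ 2 ≤ (1 + ε) / ε * a ^ 2 + (1 + ε) * b ^ 2 := by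
  have key : (1 + ε) / ε * a ^ 2 + (1 + ε) * b ^ 2 - (a + b) ^ 2 = (a - ε * b) ^ 2 / ε := by
    field_simp
    ring
  rw [← sub_nonneg, key]
  positivity

section InnerProductSpace

variable {𝕜 E : Type*} [RCLike 𝕜] [NormedAddCommGroup E] [InnerProductSpace 𝕜 E]

theorem LinearMap.IsSymmetric.mul_norm_sq_le_re_inner_map_self [FiniteDimensional 𝕜 E]
    {T : E →ₗ[𝕜] E} (hT : T.IsSymmetric) {lam : ℝ}
    (hspec : ∀ (μ : ℝ) (v : E), v ≠ 0 → T v = (μ : 𝕜) • v → μ = 0 ∨ lam ≤ μ)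
    {x : E} (hx : ∀ y, T y = 0 → ⟪y, x⟫_𝕜 = 0) :
    lam * ‖x‖ ^ 2 ≤ re ⟪x, T x⟫_𝕜 := by
  let b := hT.eigenvectorBasis rfl
  let μ := hT.eigenvalues rfl
  have hnorm : ‖x‖ ^ 2 = ∑ i, ‖b.repr x i‖ ^ 2 := by
    rw [← b.repr.norm_map, EuclideanSpace.norm_sq_eq]
  have hquad : re ⟪x, T x⟫_𝕜 = ∑ i, μ i * ‖b.repr x i‖ ^ 2 := by
    rw [← b.repr.inner_map_map, PiLp.inner_apply, map_sum]
    refine Finset.sum_congr rfl fun i _ => ?_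
    rw [hT.eigenvectorBasis_apply_self_apply, inner_apply, mul_assoc, RCLike.mul_conj]
    norm_cast
  rw [hnorm, hquad, Finset.mul_sum]
  refine Finset.sum_le_sum fun i _ => ?_
  rcases hspec (μ i) (b i) (b.orthonormal.ne_zero i) (hT.apply_eigenvectorBasis rfl i)
    with hzero | hle
  · have : b.repr x i = 0 := by
      rw [b.repr_apply_apply]
      exact hx _ (by simp [b, hT.apply_eigenvectorBasis, show hT.eigenvalues rfl i = 0 from hzero])
    simp [this]
  · gcongr

variable {e : E}

theorem inner_sub_inner_smul_self_eq_zero (he : ‖e‖ = 1) (x : E) :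
    ⟪e, x - ⟪e, x⟫_𝕜 • e⟫_𝕜 = 0 := by
  simp [inner_sub_right, inner_smul_right, inner_self_eq_norm_sq_to_K, he]

theorem norm_sq_eq_norm_inner_sq_add_norm_sub_sq (he : ‖e‖ = 1) (x : E) :
    ‖x‖ ^ 2 = ‖⟪e, x⟫_𝕜‖ ^ 2 + ‖x - ⟪e, x⟫_𝕜 • e‖ ^ 2 := by
  have horth : ⟪⟪e, x⟫_𝕜 • e, x - ⟪e, x⟫_𝕜 • e⟫_𝕜 = 0 := by
    rw [inner_smul_left, inner_sub_inner_smul_self_eq_zero he, mul_zero]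
  have := norm_add_sq_eq_norm_sq_add_norm_sq_of_inner_eq_zero _ _ horth
  rwa [add_sub_cancel, norm_smul, he, mul_one, ← sq, ← sq, ← sq] at this

theorem norm_inner_sq_le_of_inner_eq_zero (he : ‖e‖ = 1) {g : E} (hg : ⟪e, g⟫_𝕜 = 0) (ψ : E) :
    ‖⟪ψ, g⟫_𝕜‖ ^ 2 ≤ (‖ψ‖ ^ 2 - ‖⟪e, ψ⟫_𝕜‖ ^ 2) * ‖g‖ ^ 2 := by
  have hproj : ⟪ψ, g⟫_𝕜 = ⟪ψ - ⟪e, ψ⟫_𝕜 • e, g⟫_𝕜 := by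
    rw [inner_sub_left, inner_smul_left, hg, mul_zero, sub_zero]
  rw [hproj, norm_sq_eq_norm_inner_sq_add_norm_sub_sq (𝕜 := 𝕜) he ψ, add_sub_cancel_left, ← mul_pow]
  gcongr
  exact norm_inner_le_norm (𝕜 := 𝕜) _ _

theorem norm_sq_le_of_poincare {ψ f : E} {lam D ε : ℝ} (he : ‖e‖ = 1) (hψ : ⟪ψ, e⟫_𝕜 ≠ 0)
    (hlam : 0 < lam) (hε : 0 < ε) (hD : lam * ‖f - ⟪e, f⟫_𝕜 • e‖ ^ 2 ≤ D) :
    ‖f‖ ^ 2 ≤ (1 + ε) * (‖ψ‖ ^ 2 / (lam * ‖⟪ψ, e⟫_𝕜‖ ^ 2)) * D +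
      (1 + ε) / ε * (‖⟪ψ, f⟫_𝕜‖ ^ 2 / ‖⟪ψ, e⟫_𝕜‖ ^ 2) := by
  set c := ⟪e, f⟫_𝕜
  set g := f - c • e
  set Q := ‖⟪ψ, e⟫_𝕜‖
  have hQ : 0 < Q := norm_pos_iff.mpr hψ
  have hsplit : ⟪ψ, f⟫_𝕜 = c * ⟪ψ, e⟫_𝕜 + ⟪ψ, g⟫_𝕜 := by
    rw [← inner_smul_right, ← inner_add_right, add_sub_cancel]
  have htri : ‖c‖ * Q ≤ ‖⟪ψ, f⟫_𝕜‖ + ‖⟪ψ, g⟫_𝕜‖ := by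
    rw [← norm_mul, eq_sub_of_add_eq hsplit.symm]
    exact norm_sub_le _ _
  have hcs : ‖⟪ψ, g⟫_𝕜‖ ^ 2 ≤ (‖ψ‖ ^ 2 - Q ^ 2) * ‖g‖ ^ 2 := by
    simpa only [Q, norm_inner_symm] using
      norm_inner_sq_le_of_inner_eq_zero he (inner_sub_inner_smul_self_eq_zero he f) ψ
  have hc : (‖c‖ * Q) ^ 2 ≤ (1 + ε) / ε * ‖⟪ψ, f⟫_𝕜‖ ^ 2 + (1 + ε) * (‖ψ‖ ^ 2 - Q ^ 2) * ‖g‖ ^ 2 :=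
    calc (‖c‖ * Q) ^ 2 ≤ (‖⟪ψ, f⟫_𝕜‖ + ‖⟪ψ, g⟫_𝕜‖) ^ 2 := by gcongr
      _ ≤ _ := add_sq_le_one_add_div_mul_sq_add hε
      _ ≤ _ := by rw [mul_assoc]; gcongr
  have hgD : ‖g‖ ^ 2 ≤ D / lam := by rw [le_div_iff₀ hlam]; linarith
  calc ‖f‖ ^ 2 = ‖c‖ ^ 2 + ‖g‖ ^ 2 := norm_sq_eq_norm_inner_sq_add_norm_sub_sq he f
    _ ≤ ((1 + ε) / ε * ‖⟪ψ, f⟫_𝕜‖ ^ 2 + (1 + ε) * ‖ψ‖ ^ 2 * ‖g‖ ^ 2) / Q ^ 2 := by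
      rw [le_div_iff₀ (by positivity)]
      rw [mul_pow] at hc
      nlinarith [mul_nonneg hε.le (mul_nonneg (sq_nonneg Q) (sq_nonneg ‖g‖))]
    _ ≤ ((1 + ε) / ε * ‖⟪ψ, f⟫_𝕜‖ ^ 2 + (1 + ε) * ‖ψ‖ ^ 2 * (D / lam)) / Q ^ 2 := by gcongr
    _ = _ := by field_simp; ring

end InnerProductSpace

section Graph

open Matrix WithLp

variable {V : Type*} [Fintype V]

theorem ip_eq_inner (ψ f : V → ℂ) : ip ψ f = ⟪toLp 2 ψ, toLp 2 f⟫_ℂ := by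
  simp [ip, PiLp.inner_apply, mul_comm]

theorem nsq_eq_norm_sq (f : V → ℂ) : nsq f = ‖toLp 2 f‖ ^ 2 := by
  simp [nsq, EuclideanSpace.norm_sq_eq]

theorem inner_toLp_const (a : ℂ) (f : V → ℂ) :
    ⟪toLp 2 (fun _ : V => a), toLp 2 f⟫_ℂ = starRingEnd ℂ a * ∑ v, f v := by
  simp [← ip_eq_inner, ip, Finset.mul_sum]

theorem norm_toLp_const_inv_sqrt_card [Nonempty V] :
    ‖toLp 2 (fun _ : V => ((1 / Real.sqrt (Fintype.card V) : ℝ) : ℂ))‖ = 1 := by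
  rw [← pow_eq_one_iff_of_nonneg (norm_nonneg _) two_ne_zero, ← nsq_eq_norm_sq]
  have hcard : (0 : ℝ) < Fintype.card V := by exact_mod_cast Fintype.card_pos
  simp [nsq, Real.sq_sqrt hcard.le, hcard.ne']

theorem ip_eq_zero_of_forall_eq {φ g : V → ℂ} (hφ : ∀ u v, φ u = φ v) (hg : ∑ v, g v = 0) :
    ip φ g = 0 := by
  rcases isEmpty_or_nonempty V with hV | ⟨⟨v₀⟩⟩
  · simp [ip]
  · simp [ip, hφ _ v₀, ← Finset.mul_sum, hg]

variable (w : V → V → ℝ)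

theorem gradSq_sub_const (f : V → ℂ) (a : ℂ) : gradSq w (fun v => f v - a) = gradSq w f := by
  simp [gradSq]

theorem ip_lap_self (hsymm : ∀ u v, w u v = w v u) (f : V → ℂ) :
    ip f (lap w f) = gradSq w f := by
  have hleft : ip f (lap w f) = ∑ u, ∑ v, starRingEnd ℂ (f u) * (f u - f v) * (w u v : ℂ) := by
    simp only [ip, lap, Finset.mul_sum, mul_assoc]
  have hright : ip f (lap w f) = ∑ u, ∑ v, -(starRingEnd ℂ (f v) * (f u - f v) * (w u v : ℂ)) := by
    rw [hleft, Finset.sum_comm]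
    refine Finset.sum_congr rfl fun u _ => Finset.sum_congr rfl fun v _ => ?_
    rw [hsymm]
    ring
  have hsq : ∀ u v, starRingEnd ℂ (f u) * (f u - f v) * (w u v : ℂ) +
      -(starRingEnd ℂ (f v) * (f u - f v) * (w u v : ℂ)) = ((‖f u - f v‖ ^ 2 * w u v : ℝ) : ℂ) := by
    intro u v
    rw [← neg_mul, ← add_mul, ← neg_mul, ← add_mul, ← sub_eq_add_neg, ← map_sub,
      Complex.conj_mul']
    push_cast
    ring
  have htwice : 2 * ip f (lap w f) = ∑ u, ∑ v, ((‖f u - f v‖ ^ 2 * w u v : ℝ) : ℂ) := by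
    rw [two_mul]
    nth_rw 1 [hleft]
    rw [hright, ← Finset.sum_add_distrib]
    simp only [← Finset.sum_add_distrib, hsq]
  rw [gradSq]
  push_cast at htwice ⊢
  linear_combination htwice / 2

theorem forall_eq_of_gradSq_eq_zero (hnn : ∀ u v, 0 ≤ w u v) (hconn : GraphConnected w)
    {f : V → ℂ} (hf : gradSq w f = 0) (u v : V) : f u = f v := by
  have hedge : ∀ a b, 0 < w a b → f a = f b := by
    intro a b hab
    have hsum : ∑ u, ∑ v, ‖f u - f v‖ ^ 2 * w u v = 0 := by
      simpa [gradSq] using hf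
    have hterm := Finset.sum_eq_zero_iff_of_nonneg (fun _ _ => Finset.sum_nonneg fun _ _ =>
      mul_nonneg (sq_nonneg _) (hnn _ _)) |>.mp hsum a (Finset.mem_univ _)
    have := (Finset.sum_eq_zero_iff_of_nonneg fun _ _ => mul_nonneg (sq_nonneg _) (hnn _ _)).mp
      hterm b (Finset.mem_univ _)
    simpa [hab.ne', sub_eq_zero] using this
  induction hconn u v with
  | refl => rfl
  | tail _ hab ih => exact ih.trans (hedge _ _ hab)

noncomputable def lapMatrix [DecidableEq V] : Matrix V V ℂ :=
  diagonal (fun v => ∑ u, (w v u : ℂ)) - of fun v u => (w v u : ℂ)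

theorem lapMatrix_mulVec [DecidableEq V] (f : V → ℂ) : lapMatrix w *ᵥ f = lap w f := by
  ext v
  simp only [lapMatrix, sub_mulVec, mulVec_diagonal, Pi.sub_apply, lap]
  simp [mulVec, dotProduct, mul_sub, Finset.mul_sum, mul_comm]

theorem isHermitian_lapMatrix [DecidableEq V] (hsymm : ∀ u v, w u v = w v u) :
    (lapMatrix w).IsHermitian := by
  ext u v
  by_cases h : u = v
  · subst h; simp [lapMatrix]
  · simp [lapMatrix, h, Ne.symm h, hsymm u v]

theorem mul_nsq_le_gradSq_of_sum_eq_zero (hsymm : ∀ u v, w u v = w v u) (hnn : ∀ u v, 0 ≤ w u v)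
    (hconn : GraphConnected w) {lam : ℝ} (hlam : IsFirstNonzeroEig w lam)
    {g : V → ℂ} (hg : ∑ v, g v = 0) : lam * nsq g ≤ gradSq w g := by
  classical
  let T := toEuclideanLin (lapMatrix w)
  have hT : ∀ x, T x = toLp 2 (lap w (ofLp x)) := fun x =>
    congrArg (toLp 2) (lapMatrix_mulVec w (ofLp x))
  have hspec : ∀ (μ : ℝ) (v : EuclideanSpace ℂ V), v ≠ 0 → T v = (μ : ℂ) • v →
      μ = 0 ∨ lam ≤ μ := by
    intro μ v hv hTv
    rw [hT] at hTv
    exact hlam.2.2 μ (ofLp v) (by simpa using hv) (congrArg ofLp hTv)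
  have hker : ∀ y, T y = 0 → ⟪y, toLp 2 g⟫_ℂ = 0 := by
    intro y hy
    rw [hT] at hy
    have hlap : lap w (ofLp y) = 0 := congrArg ofLp hy
    have hgrad : gradSq w (ofLp y) = 0 := by
      have := ip_lap_self w hsymm (ofLp y)
      rw [hlap] at this
      exact_mod_cast (by simpa [ip] using this.symm)
    rw [← toLp_ofLp (x := y), ← ip_eq_inner]
    exact ip_eq_zero_of_forall_eq (forall_eq_of_gradSq_eq_zero w hnn hconn hgrad) hg
  have hquad : ⟪toLp 2 g, T (toLp 2 g)⟫_ℂ = gradSq w g := by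
    rw [← ip_lap_self w hsymm, ip_eq_inner, hT]
  have := (isSymmetric_toEuclideanLin_iff.mpr (isHermitian_lapMatrix w hsymm)
    ).mul_norm_sq_le_re_inner_map_self hspec hker
  rwa [hquad, re_to_complex, Complex.ofReal_re, ← nsq_eq_norm_sq] at this

end Graph

theorem stmt4_general {V : Type*} [Fintype V] (w : V → V → ℝ)
    (hsymm : ∀ u v, w u v = w v u) (hnn : ∀ u v, 0 ≤ w u v)
    (hconn : GraphConnected w)
    (lam1 : ℝ) (hlam : IsFirstNonzeroEig w lam1)
    (φ0 : V → ℂ) (hφ0 : φ0 = fun _ => ((1 / Real.sqrt (Fintype.card V) : ℝ) : ℂ))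
    (ψ : V → ℂ) (hnz : ip ψ φ0 ≠ 0)
    (f : V → ℂ) (ε : ℝ) (hε : 0 < ε) :
    nsq f ≤ (1 + ε) * (nsq ψ / (lam1 * ‖ip ψ φ0‖ ^ 2)) * gradSq w f +
      ((1 + ε) / ε) * (‖ip ψ f‖ ^ 2 / ‖ip ψ φ0‖ ^ 2) := by
  subst hφ0
  have : Nonempty V := by
    by_contra hV
    simp [not_nonempty_iff.mp hV, ip] at hnz
  set r : ℝ := 1 / Real.sqrt (Fintype.card V)
  set e : EuclideanSpace ℂ V := WithLp.toLp 2 fun _ => (r : ℂ)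
  have he : ‖e‖ = 1 := norm_toLp_const_inv_sqrt_card
  set c := ⟪e, WithLp.toLp 2 f⟫_ℂ
  have hproj : WithLp.toLp 2 f - c • e = WithLp.toLp 2 (fun v => f v - c * r) := by
    ext v
    simp [e]
  have hmean : ∑ v, (f v - c * r) = 0 := by
    have horth := inner_sub_inner_smul_self_eq_zero (𝕜 := ℂ) he (WithLp.toLp 2 f)
    rw [hproj] at horth
    simp only [e, inner_toLp_const, mul_eq_zero] at horth
    exact horth.resolve_left (by simp [r, Fintype.card_ne_zero])
  have hpoincare : lam1 * ‖WithLp.toLp 2 f - c • e‖ ^ 2 ≤ gradSq w f := by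
    rw [hproj, ← nsq_eq_norm_sq, ← gradSq_sub_const w f (c * r)]
    exact mul_nsq_le_gradSq_of_sum_eq_zero w hsymm hnn hconn hlam hmean
  rw [ip_eq_inner] at hnz
  rw [nsq_eq_norm_sq, nsq_eq_norm_sq, ip_eq_inner, ip_eq_inner]
  exact norm_sq_le_of_poincare he hnz hlam.1 hε hpoincare

/-- Theorem 3.4: if `Ψ(φ₀) = ⟨ψ, φ₀⟩ ≠ 0` then for every `f ∈ ℓ²(G)` and every `ε > 0`,
`‖f‖² ≤ (1+ε)(‖ψ‖²/(λ₁|Ψ(φ₀)|²))‖∇f‖² + ((1+ε)/ε)|⟨ψ,f⟩|²/|Ψ(φ₀)|²`. -/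
theorem stmt4 {V : Type*} [Fintype V] (w : V → V → ℝ)
    (hsymm : ∀ u v, w u v = w v u) (hnn : ∀ u v, 0 ≤ w u v) (hdiag : ∀ v, w v v = 0)
    (hconn : GraphConnected w) (hcard : 1 < Fintype.card V)
    (lam1 : ℝ) (hlam : IsFirstNonzeroEig w lam1)
    (φ0 : V → ℂ) (hφ0 : φ0 = fun _ => ((1 / Real.sqrt (Fintype.card V) : ℝ) : ℂ))
    (ψ : V → ℂ) (hnz : ip ψ φ0 ≠ 0)
    (f : V → ℂ) (ε : ℝ) (hε : 0 < ε) :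
    nsq f ≤ (1 + ε) * (nsq ψ / (lam1 * ‖ip ψ φ0‖ ^ 2)) * gradSq w f +
      ((1 + ε) / ε) * (‖ip ψ f‖ ^ 2 / ‖ip ψ φ0‖ ^ 2) :=
  stmt4_general w hsymm hnn hconn lam1 hlam φ0 hφ0 ψ hnz f ε hε
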